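/- arXiv:math/9805081 — 3 statements merged into one kernel-verified Lean document; each statement's English description precedes it below -/
import Mathlib

section
/- Let g, h : (0,∞) → [0,ω₁) be left-continuous non-increasing functions whose ranges are finite sets of ordinals, such that there exists A < ∞ with g(t) = h(t) = 0 for all t > A, and g(t) ≤ h(t) for all t. Let I = (a,b] be an interval on which both g and h are constant, and let γ be an ordinal with γ ≤ g(t) for t ∈ I. If G and H are the non-increasing left-continuous rearrangements of g − γ·1_I and h − γ·1_I respectively, then G(t) ≤ H(t) for all t > 0, and λ({t : g(t)+1 ≤ h(t)}) ≤ λ({t : G(t)+1 ≤ H(t)}). -/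
/-!
Subtracting `γ` on `I` keeps `u := g − γ·1_I` below `v := h − γ·1_I` and turns `g < h` into
`u < v`. Rearranging preserves the measure of every superlevel set `{· ≥ α}`, and a
non-increasing left-continuous function is determined by these measures; this gives `G ≤ H`.
For the second claim split `{u < v}` by the value `β` of `u`: the piece `{u = β < v}` has measure
at most `min |{u ≥ β}| |{v > β}| - |{u > β}|`, and for `G`, `H`, whose superlevel sets are nested
intervals, the piece `{G = β < H}` attains this bound.
-/

open MeasureTheory Set Ordinal Filter
open scoped Classical

/-- `g` is non-increasing on `(0,∞)`. -/
def NonIncr (g : ℝ → Ordinal) : Prop := ∀ s t : ℝ, 0 < s → s ≤ t → g t ≤ g s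

/-- `g` is left continuous on `(0,∞)`; for non-increasing ordinal-valued
functions this is equivalent to being locally constant from the left. -/
def LeftCont (g : ℝ → Ordinal) : Prop :=
  ∀ t : ℝ, 0 < t → ∃ δ > 0, ∀ s : ℝ, t - δ < s → s ≤ t → g s = g t

/-- `g` has finite range on `(0,∞)`. -/
def FiniteRange (g : ℝ → Ordinal) : Prop := (g '' Set.Ioi (0:ℝ)).Finite

/-- `g` takes values in `[0,ω₁)`, the countable ordinals. -/
def CountableValued (g : ℝ → Ordinal) : Prop := ∀ t : ℝ, 0 < t → g t < ω₁

/-- `g` vanishes beyond `A`. -/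
def VanishesBeyond (g : ℝ → Ordinal) (A : ℝ) : Prop := ∀ t : ℝ, A < t → g t = 0

/-- The level set `{t ∈ (0,∞) : g t = α}`. -/
def lev (g : ℝ → Ordinal) (α : Ordinal) : Set ℝ := {t | 0 < t ∧ g t = α}

/-- `G` is the non-increasing left-continuous rearrangement of `u`: it is
non-increasing, left continuous, and each nonzero level set has the same
Lebesgue measure as that of `u`. -/
def IsRearrangement (G u : ℝ → Ordinal) : Prop :=
  NonIncr G ∧ LeftCont G ∧ ∀ α : Ordinal, 0 < α → volume (lev G α) = volume (lev u α)

/-- The function `g − γ·1_I` (pointwise ordinal subtraction on `I`). -/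
noncomputable def subInd (g : ℝ → Ordinal) (γ : Ordinal) (I : Set ℝ) : ℝ → Ordinal :=
  fun t => if t ∈ I then g t - γ else g t

def superlevel (f : ℝ → Ordinal) (α : Ordinal) : Set ℝ := {t | 0 < t ∧ α ≤ f t}

lemma superlevel_zero (f : ℝ → Ordinal) : superlevel f 0 = Ioi 0 := by
  ext t
  simp [superlevel]

lemma superlevel_anti (f : ℝ → Ordinal) {α β : Ordinal} (h : α ≤ β) :
    superlevel f β ⊆ superlevel f α :=
  fun _ ⟨ht, hβ⟩ => ⟨ht, h.trans hβ⟩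

lemma superlevel_mono {f k : ℝ → Ordinal} (h : ∀ t, 0 < t → f t ≤ k t) (α : Ordinal) :
    superlevel f α ⊆ superlevel k α :=
  fun t ⟨ht, hα⟩ => ⟨ht, hα.trans (h t ht)⟩

section NonIncr

variable {f k : ℝ → Ordinal}

lemma NonIncr.measurableSet_setOf_mem (hf : NonIncr f) {S : Set Ordinal} (hS : S.OrdConnected) :
    MeasurableSet {t | 0 < t ∧ f t ∈ S} := by
  refine OrdConnected.measurableSet ⟨?_⟩
  rintro x ⟨hx, hxS⟩ y ⟨-, hyS⟩ z ⟨hxz, hzy⟩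
  have hz : 0 < z := hx.trans_le hxz
  exact ⟨hz, hS.out hyS hxS ⟨hf z y hz hzy, hf x z hx hxz⟩⟩

lemma NonIncr.measurableSet_superlevel (hf : NonIncr f) (α : Ordinal) :
    MeasurableSet (superlevel f α) :=
  hf.measurableSet_setOf_mem ordConnected_Ici

lemma NonIncr.mem_superlevel_of_le (hf : NonIncr f) {α : Ordinal} {s t : ℝ}
    (ht : t ∈ superlevel f α) (hs : 0 < s) (hst : s ≤ t) : s ∈ superlevel f α :=
  ⟨hs, ht.2.trans (hf s t hs hst)⟩

lemma NonIncr.superlevel_total (hf : NonIncr f) (hk : NonIncr k) (α β : Ordinal) :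
    superlevel f α ⊆ superlevel k β ∨ superlevel k β ⊆ superlevel f α := by
  by_contra! h
  obtain ⟨t, htf, htk⟩ := not_subset.1 h.1
  obtain ⟨s, hsk, hsf⟩ := not_subset.1 h.2
  rcases le_total s t with hst | hts
  · exact hsf (hf.mem_superlevel_of_le htf hsk.1 hst)
  · exact htk (hk.mem_superlevel_of_le hsk htf.1 hts)

/-- For a non-increasing left-continuous function the superlevel sets are the intervals
`(0, m]`, so the function is recovered from their measures. -/
lemma NonIncr.le_apply_iff (hf : NonIncr f) (hlc : LeftCont f) (α : Ordinal) {t : ℝ}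
    (ht : 0 < t) : α ≤ f t ↔ ENNReal.ofReal t ≤ volume (superlevel f α) := by
  constructor
  · intro hα
    calc ENNReal.ofReal t = volume (Ioc 0 t) := by rw [Real.volume_Ioc, _root_.sub_zero]
      _ ≤ volume (superlevel f α) := measure_mono fun s hs => ⟨hs.1, hα.trans (hf s t hs.1 hs.2)⟩
  · intro hvol
    by_contra! hlt
    obtain ⟨δ, hδ, hδ'⟩ := hlc t ht
    have hsub : superlevel f α ⊆ Ioc 0 (t - δ) := by
      refine fun r ⟨hr, hαr⟩ => ⟨hr, not_lt.1 fun hδr => ?_⟩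
      have hrt : f r ≤ f t := by
        rcases le_total r t with hrt | htr
        · exact (hδ' r hδr hrt).le
        · exact hf t r ht htr
      exact (hαr.trans hrt).not_gt hlt
    have := hvol.trans (measure_mono hsub)
    rw [Real.volume_Ioc, _root_.sub_zero, ENNReal.ofReal_le_ofReal_iff'] at this
    rcases this with h | h <;> linarith

lemma LeftCont.volume_lev_apply_pos (hlc : LeftCont f) {t : ℝ} (ht : 0 < t) :
    0 < volume (lev f (f t)) := by
  obtain ⟨δ, hδ, hδ'⟩ := hlc t ht
  have hsub : Ioc (max (t - δ) 0) t ⊆ lev f (f t) := fun r ⟨hr, hrt⟩ =>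
    ⟨(le_max_right _ _).trans_lt hr, hδ' r ((le_max_left _ _).trans_lt hr) hrt⟩
  calc (0 : ENNReal) < volume (Ioc (max (t - δ) 0) t) := by
        rw [Real.volume_Ioc, ENNReal.ofReal_pos, sub_pos]
        exact max_lt (by linarith) ht
    _ ≤ _ := measure_mono hsub

end NonIncr

section FiniteLevels

variable {f : ℝ → Ordinal} {F : Finset Ordinal}

lemma superlevel_eq_biUnion_lev (hF : ∀ t, 0 < t → 0 < f t → f t ∈ F) {α : Ordinal}
    (hα : 0 < α) : superlevel f α = ⋃ β ∈ F.filter (α ≤ ·), lev f β := by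
  ext t
  simp only [superlevel, lev, mem_ofPred_eq, mem_iUnion, Finset.mem_filter, exists_prop]
  constructor
  · rintro ⟨ht, hαt⟩
    exact ⟨f t, ⟨hF t ht (hα.trans_le hαt), hαt⟩, ht, rfl⟩
  · rintro ⟨β, ⟨-, hαβ⟩, ht, rfl⟩
    exact ⟨ht, hαβ⟩

lemma measurableSet_superlevel (hF : ∀ t, 0 < t → 0 < f t → f t ∈ F)
    (hlev : ∀ β, MeasurableSet (lev f β)) {α : Ordinal} (hα : 0 < α) :
    MeasurableSet (superlevel f α) := by
  rw [superlevel_eq_biUnion_lev hF hα]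
  exact Finset.measurableSet_biUnion _ fun β _ => hlev β

lemma volume_superlevel_eq_sum (hF : ∀ t, 0 < t → 0 < f t → f t ∈ F)
    (hlev : ∀ β, MeasurableSet (lev f β)) {α : Ordinal} (hα : 0 < α) :
    volume (superlevel f α) = ∑ β ∈ F.filter (α ≤ ·), volume (lev f β) := by
  rw [superlevel_eq_biUnion_lev hF hα]
  refine measure_biUnion_finset (fun β _ β' _ hne => ?_) fun β _ => hlev β
  exact disjoint_left.2 fun t h h' => hne (h.2 ▸ h'.2)

end FiniteLevels

section Rearrangement

variable {G H u v : ℝ → Ordinal}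

lemma IsRearrangement.volume_superlevel_eq (hG : IsRearrangement G u) (hu : FiniteRange u)
    (hlev : ∀ β, MeasurableSet (lev u β)) (α : Ordinal) :
    volume (superlevel G α) = volume (superlevel u α) := by
  obtain ⟨hNI, hLC, hvol⟩ := hG
  rcases (zero_le (a := α)).eq_or_lt with rfl | hα
  · rw [superlevel_zero, superlevel_zero]
  have hFu : ∀ t, 0 < t → 0 < u t → u t ∈ hu.toFinset := fun t ht _ =>
    hu.mem_toFinset.2 ⟨t, ht, rfl⟩
  -- a value taken by `G` has a level set of positive measure, hence is a value of `u`
  have hFG : ∀ t, 0 < t → 0 < G t → G t ∈ hu.toFinset := by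
    intro t ht hGt
    obtain ⟨s, hs, hsu⟩ :=
      nonempty_of_measure_ne_zero ((hvol _ hGt) ▸ hLC.volume_lev_apply_pos ht).ne'
    exact hsu ▸ hFu s hs (hsu ▸ hGt)
  rw [volume_superlevel_eq_sum hFG (fun β => hNI.measurableSet_setOf_mem ordConnected_singleton) hα,
    volume_superlevel_eq_sum hFu hlev hα]
  exact Finset.sum_congr rfl fun β hβ => hvol β (hα.trans_le (Finset.mem_filter.1 hβ).2)

lemma IsRearrangement.apply_le_of_le (hG : IsRearrangement G u) (hH : IsRearrangement H v)
    (hu : FiniteRange u) (hv : FiniteRange v) (hulev : ∀ β, MeasurableSet (lev u β))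
    (hvlev : ∀ β, MeasurableSet (lev v β)) (huv : ∀ t, 0 < t → u t ≤ v t) {t : ℝ} (ht : 0 < t) :
    G t ≤ H t := by
  refine (hH.1.le_apply_iff hH.2.1 _ ht).2 ?_
  calc ENNReal.ofReal t ≤ volume (superlevel G (G t)) := (hG.1.le_apply_iff hG.2.1 _ ht).1 le_rfl
    _ = volume (superlevel u (G t)) := hG.volume_superlevel_eq hu hulev _
    _ ≤ volume (superlevel v (G t)) := measure_mono (superlevel_mono huv _)
    _ = volume (superlevel H (G t)) := (hH.volume_superlevel_eq hv hvlev _).symm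

def gapSet (u v : ℝ → Ordinal) (β : Ordinal) : Set ℝ :=
  (superlevel u β ∩ superlevel v (Order.succ β)) \ superlevel u (Order.succ β)

lemma mem_gapSet {β : Ordinal} {t : ℝ} : t ∈ gapSet u v β ↔ 0 < t ∧ u t = β ∧ β < v t := by
  simp only [gapSet, superlevel, Set.mem_sdiff, mem_inter_iff, mem_ofPred_eq, Order.succ_le_iff,
    not_and, not_lt]
  constructor
  · rintro ⟨⟨⟨ht, hβ⟩, -, hv⟩, hu⟩
    exact ⟨ht, le_antisymm (hu ht) hβ, hv⟩
  · rintro ⟨ht, rfl, hv⟩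
    exact ⟨⟨⟨ht, le_rfl⟩, ht, hv⟩, fun _ => le_rfl⟩

lemma superlevel_succ_subset_inter (huv : ∀ t, 0 < t → u t ≤ v t) (β : Ordinal) :
    superlevel u (Order.succ β) ⊆ superlevel u β ∩ superlevel v (Order.succ β) :=
  subset_inter (superlevel_anti u (Order.le_succ β)) (superlevel_mono huv _)

lemma volume_gapSet_le (huv : ∀ t, 0 < t → u t ≤ v t) {β : Ordinal}
    (hmeas : MeasurableSet (superlevel u (Order.succ β)))
    (hfin : volume (superlevel u (Order.succ β)) ≠ ⊤) :
    volume (gapSet u v β) ≤ min (volume (superlevel u β)) (volume (superlevel v (Order.succ β)))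
      - volume (superlevel u (Order.succ β)) := by
  rw [gapSet, measure_sdiff (superlevel_succ_subset_inter huv β) hmeas.nullMeasurableSet hfin]
  exact tsub_le_tsub_right (le_min (measure_mono inter_subset_left)
    (measure_mono inter_subset_right)) _

/-- Equality in `volume_gapSet_le`, since superlevel sets of non-increasing functions are nested. -/
lemma NonIncr.volume_gapSet (hG : NonIncr G) (hH : NonIncr H) (hGH : ∀ t, 0 < t → G t ≤ H t)
    {β : Ordinal} (hfin : volume (superlevel G (Order.succ β)) ≠ ⊤) :
    volume (gapSet G H β) = min (volume (superlevel G β)) (volume (superlevel H (Order.succ β)))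
      - volume (superlevel G (Order.succ β)) := by
  rw [gapSet, measure_sdiff (superlevel_succ_subset_inter hGH β)
    (hG.measurableSet_superlevel _).nullMeasurableSet hfin]
  rcases hG.superlevel_total hH β (Order.succ β) with h | h
  · rw [inter_eq_left.2 h, min_eq_left (measure_mono h)]
  · rw [inter_eq_right.2 h, min_eq_right (measure_mono h)]

lemma IsRearrangement.volume_setOf_lt_le (hG : IsRearrangement G u) (hH : IsRearrangement H v)
    (hu : FiniteRange u) (hv : FiniteRange v) (hulev : ∀ β, MeasurableSet (lev u β))
    (hvlev : ∀ β, MeasurableSet (lev v β)) (huv : ∀ t, 0 < t → u t ≤ v t)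
    (hufin : ∀ α, 0 < α → volume (superlevel u α) ≠ ⊤) :
    volume {t | 0 < t ∧ u t < v t} ≤ volume {t | 0 < t ∧ G t < H t} := by
  have hFu : ∀ t, 0 < t → 0 < u t → u t ∈ hu.toFinset := fun t ht _ =>
    hu.mem_toFinset.2 ⟨t, ht, rfl⟩
  have hGH : ∀ t, 0 < t → G t ≤ H t := fun t =>
    hG.apply_le_of_le hH hu hv hulev hvlev huv
  have hsucc : ∀ β : Ordinal, 0 < Order.succ β := fun β => (zero_le (a := β)).trans_lt (Order.lt_succ β)
  have hcover : {t | 0 < t ∧ u t < v t} ⊆ ⋃ β ∈ hu.toFinset, gapSet u v β := fun t ⟨ht, hlt⟩ =>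
    mem_biUnion (hu.mem_toFinset.2 ⟨t, ht, rfl⟩) (mem_gapSet.2 ⟨ht, rfl, hlt⟩)
  have hinside : (⋃ β ∈ hu.toFinset, gapSet G H β) ⊆ {t | 0 < t ∧ G t < H t} := by
    refine iUnion₂_subset fun β _ t h => ?_
    obtain ⟨ht, rfl, hlt⟩ := mem_gapSet.1 h
    exact ⟨ht, hlt⟩
  have hdisj : (hu.toFinset : Set Ordinal).PairwiseDisjoint (gapSet G H) :=
    fun β _ β' _ hne => disjoint_left.2 fun t h h' =>
      hne ((mem_gapSet.1 h).2.1 ▸ (mem_gapSet.1 h').2.1)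
  calc volume {t | 0 < t ∧ u t < v t} ≤ volume (⋃ β ∈ hu.toFinset, gapSet u v β) :=
        measure_mono hcover
    _ ≤ ∑ β ∈ hu.toFinset, volume (gapSet u v β) := measure_biUnion_finset_le _ _
    _ ≤ ∑ β ∈ hu.toFinset, volume (gapSet G H β) := by
        refine Finset.sum_le_sum fun β _ => ?_
        have hfinG := hG.volume_superlevel_eq hu hulev (Order.succ β) ▸ hufin _ (hsucc β)
        rw [hG.1.volume_gapSet hH.1 hGH hfinG, hG.volume_superlevel_eq hu hulev,
          hG.volume_superlevel_eq hu hulev, hH.volume_superlevel_eq hv hvlev]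
        exact volume_gapSet_le huv (measurableSet_superlevel hFu hulev (hsucc β)) (hufin _ (hsucc β))
    _ = volume (⋃ β ∈ hu.toFinset, gapSet G H β) := by
        refine (measure_biUnion_finset hdisj fun β _ => ?_).symm
        exact ((hG.1.measurableSet_superlevel β).inter (hH.1.measurableSet_superlevel _)).diff
          (hG.1.measurableSet_superlevel _)
    _ ≤ volume {t | 0 < t ∧ G t < H t} := measure_mono hinside

end Rearrangement

section SubInd

variable {g h : ℝ → Ordinal} {γ : Ordinal} {I : Set ℝ}

lemma setOf_subInd_mem (g : ℝ → Ordinal) (γ : Ordinal) (I : Set ℝ) (S : Set Ordinal) :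
    {t | 0 < t ∧ subInd g γ I t ∈ S} =
      ({t | 0 < t ∧ g t ∈ S} \ I) ∪ ({t | 0 < t ∧ g t - γ ∈ S} ∩ I) := by
  ext t
  by_cases ht : t ∈ I <;> simp [subInd, ht]

lemma NonIncr.sub_const (hg : NonIncr g) (γ : Ordinal) : NonIncr fun t => g t - γ :=
  fun s t hs hst => Ordinal.sub_le.2 ((hg s t hs hst).trans (Ordinal.le_add_sub _ γ))

lemma NonIncr.measurableSet_lev_subInd (hg : NonIncr g) (hI : MeasurableSet I) (β : Ordinal) :
    MeasurableSet (lev (subInd g γ I) β) := by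
  change MeasurableSet {t | 0 < t ∧ subInd g γ I t ∈ ({β} : Set Ordinal)}
  rw [setOf_subInd_mem]
  exact ((hg.measurableSet_setOf_mem ordConnected_singleton).diff hI).union
    (((hg.sub_const γ).measurableSet_setOf_mem ordConnected_singleton).inter hI)

lemma FiniteRange.subInd (hg : FiniteRange g) (γ : Ordinal) (I : Set ℝ) :
    FiniteRange (subInd g γ I) := by
  refine (hg.union (hg.image (· - γ))).subset ?_
  rintro _ ⟨t, ht, rfl⟩
  by_cases htI : t ∈ I
  · exact Or.inr ⟨g t, ⟨t, ht, rfl⟩, by simp [_root_.subInd, htI]⟩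
  · exact Or.inl ⟨t, ht, by simp [_root_.subInd, htI]⟩

lemma subInd_le_subInd (hle : ∀ t, 0 < t → g t ≤ h t) {t : ℝ} (ht : 0 < t) :
    subInd g γ I t ≤ subInd h γ I t := by
  unfold subInd
  split_ifs
  · exact Ordinal.sub_le.2 ((hle t ht).trans (Ordinal.le_add_sub _ γ))
  · exact hle t ht

lemma subInd_lt_subInd (hγ : ∀ t ∈ I, γ ≤ g t) {t : ℝ} (hlt : g t < h t) :
    subInd g γ I t < subInd h γ I t := by
  unfold subInd
  split_ifs with htI
  · rwa [Ordinal.lt_sub, Ordinal.add_sub_cancel_of_le (hγ t htI)]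
  · exact hlt

lemma VanishesBeyond.subInd {A : ℝ} (hg : VanishesBeyond g A) (γ : Ordinal) (I : Set ℝ) :
    VanishesBeyond (subInd g γ I) A := by
  intro t ht
  simp [_root_.subInd, hg t ht]

lemma VanishesBeyond.volume_superlevel_ne_top {A : ℝ} (hg : VanishesBeyond g A) {α : Ordinal}
    (hα : 0 < α) : volume (superlevel g α) ≠ ⊤ := by
  refine ne_top_of_le_ne_top (measure_Ioc_lt_top (a := 0) (b := A)).ne (measure_mono ?_)
  refine fun t ⟨ht, hαt⟩ => ⟨ht, not_lt.1 fun hAt => ?_⟩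
  exact (hα.trans_le hαt).ne' (hg t hAt)

end SubInd

theorem stmt_0_general (g h G H : ℝ → Ordinal) (A : ℝ) (a b : ℝ) (γ : Ordinal)
    (hA : ∀ t : ℝ, A < t → g t = 0 ∧ h t = 0)
    (hgNI : NonIncr g) (hgFR : FiniteRange g)
    (hhNI : NonIncr h) (hhFR : FiniteRange h)
    (hle : ∀ t : ℝ, 0 < t → g t ≤ h t)
    (hγ : ∀ t ∈ Set.Ioc a b, γ ≤ g t)
    (hG : IsRearrangement G (subInd g γ (Set.Ioc a b)))
    (hH : IsRearrangement H (subInd h γ (Set.Ioc a b))) :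
    (∀ t : ℝ, 0 < t → G t ≤ H t) ∧
      volume {t : ℝ | 0 < t ∧ g t + 1 ≤ h t} ≤ volume {t : ℝ | 0 < t ∧ G t + 1 ≤ H t} := by
  have hu := hgFR.subInd γ (Ioc a b)
  have hv := hhFR.subInd γ (Ioc a b)
  have hulev := hgNI.measurableSet_lev_subInd (γ := γ) (measurableSet_Ioc (a := a) (b := b))
  have hvlev := hhNI.measurableSet_lev_subInd (γ := γ) (measurableSet_Ioc (a := a) (b := b))
  have huv : ∀ t, 0 < t → subInd g γ (Ioc a b) t ≤ subInd h γ (Ioc a b) t :=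
    fun t => subInd_le_subInd hle
  have hufin : ∀ α, 0 < α → volume (superlevel (subInd g γ (Ioc a b)) α) ≠ ⊤ :=
    fun α => (VanishesBeyond.subInd (fun t ht => (hA t ht).1) γ _).volume_superlevel_ne_top
  refine ⟨fun t => hG.apply_le_of_le hH hu hv hulev hvlev huv, ?_⟩
  simp only [Order.add_one_le_iff]
  calc volume {t | 0 < t ∧ g t < h t}
      ≤ volume {t | 0 < t ∧ subInd g γ (Ioc a b) t < subInd h γ (Ioc a b) t} :=
        measure_mono fun t ⟨ht, hlt⟩ => ⟨ht, subInd_lt_subInd hγ hlt⟩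
    _ ≤ volume {t | 0 < t ∧ G t < H t} := hG.volume_setOf_lt_le hH hu hv hulev hvlev huv hufin

/-- Lemma 3.2, `rearrange-step`. -/
theorem stmt_0 (g h G H : ℝ → Ordinal) (A : ℝ) (a b : ℝ) (γ : Ordinal)
    (hA : ∀ t : ℝ, A < t → g t = 0 ∧ h t = 0)
    (hgNI : NonIncr g) (hgLC : LeftCont g) (hgFR : FiniteRange g) (hgCV : CountableValued g)
    (hhNI : NonIncr h) (hhLC : LeftCont h) (hhFR : FiniteRange h) (hhCV : CountableValued h)
    (hle : ∀ t : ℝ, 0 < t → g t ≤ h t)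
    (hab : 0 ≤ a) (haltb : a < b)
    (hgconst : ∀ s t : ℝ, s ∈ Set.Ioc a b → t ∈ Set.Ioc a b → g s = g t)
    (hhconst : ∀ s t : ℝ, s ∈ Set.Ioc a b → t ∈ Set.Ioc a b → h s = h t)
    (hγ : ∀ t ∈ Set.Ioc a b, γ ≤ g t)
    (hG : IsRearrangement G (subInd g γ (Set.Ioc a b)))
    (hH : IsRearrangement H (subInd h γ (Set.Ioc a b))) :
    (∀ t : ℝ, 0 < t → G t ≤ H t) ∧
      volume {t : ℝ | 0 < t ∧ g t + 1 ≤ h t} ≤ volume {t : ℝ | 0 < t ∧ G t + 1 ≤ H t} :=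
  stmt_0_general g h G H A a b γ hA hgNI hgFR hhNI hhFR hle hγ hG hH
end

section
/- Let K be a compact Hausdorff space, (μ_n) a sequence of regular Borel probability measures on K converging in the weak* topology (as functionals on C(K)), and (f_n) a sequence in C(K) with 0 ≤ f_n ≤ 1 converging weakly to 0, such that ∫ f_n dμ_n ≥ ε for all n. Then for every ε' with 0 < ε' < ε there exist an infinite subset M ⊆ ℕ and pairwise disjoint Borel sets (A_n)_{n∈M} of K such that ∫_{A_n} f_n dμ_n > ε' for every n ∈ M. -/
/-!
Let `φ` be the weak* limit of the `μₙ`. Since `f_n → 0` weakly, `φ(f_n) → 0`, so we can pick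
indices `n₀ < n₁ < …` such that `∑_{j<k} ∫ f_{n_j} dμ_{n_k} < δ²/2` with `δ = (ε - ε')/2`:
first make `φ(f_{n_j})` summably small, then take each `n_k` so late that `μ_{n_k}` sees every
earlier `f_{n_j}` almost as `φ` does. Put `A_{n_k} = {f_{n_k} ≥ δ} \ ⋃_{j<k} {f_{n_j} > δ/2}`;
these are disjoint. Discarding `{f_{n_k} < δ}` costs at most `δ` of mass, and on the removed
part `f_{n_k} ≤ 1 < (2/δ) ∑_{j<k} f_{n_j}`, which has `μ_{n_k}`-integral `< δ`. Hence
`∫_{A_{n_k}} f_{n_k} dμ_{n_k} > ε - 2δ = ε'`.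
-/

open MeasureTheory Set Filter

theorem exists_strictMono_forall_lt_rel {r : ℕ → ℕ → Prop} (hr : ∀ m, ∀ᶠ n in atTop, r m n) :
    ∃ s : ℕ → ℕ, StrictMono s ∧ ∀ ⦃m n⦄, m < n → r (s m) (s n) := by
  have hfin : ∀ t : Set ℕ, t.Finite → ∃ n, ∀ m ∈ t, m < n ∧ r m n := fun t ht =>
    ((eventually_all_finite ht).2 fun m _ => (eventually_gt_atTop m).and (hr m)).exists
  obtain ⟨s, hs⟩ := seq_of_forall_finite_exists hfin
  have hs' : ∀ ⦃m n⦄, m < n → s m < s n ∧ r (s m) (s n) := fun m n hmn =>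
    hs n (s m) (mem_image_of_mem s hmn)
  exact ⟨s, fun _ _ h => (hs' h).1, fun _ _ h => (hs' h).2⟩

theorem exists_strictMono_sum_lt {b : ℕ → ℕ → ℝ} {c : ℕ → ℝ}
    (hb : ∀ j, Tendsto (b j) atTop (nhds (c j))) (hc : Tendsto c atTop (nhds 0))
    {η : ℝ} (hη : 0 < η) :
    ∃ n : ℕ → ℕ, StrictMono n ∧ ∀ k, ∑ j ∈ Finset.range k, b (n j) (n k) < η := by
  set w : ℕ → ℝ := fun i => η / 4 * (1 / 2) ^ i
  obtain ⟨p, hp, hcp⟩ : ∃ p : ℕ → ℕ, StrictMono p ∧ ∀ i, c (p i) < w i :=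
    extraction_forall_of_eventually fun i => hc.eventually_lt_const (by positivity)
  obtain ⟨s, hs, hbs⟩ : ∃ s : ℕ → ℕ, StrictMono s ∧
      ∀ ⦃j k⦄, j < k → b (p (s j)) (p (s k)) < w (s j) :=
    exists_strictMono_forall_lt_rel fun i =>
      hp.tendsto_atTop.eventually ((hb (p i)).eventually_lt_const (hcp i))
  refine ⟨p ∘ s, hp.comp hs, fun k => ?_⟩
  calc ∑ j ∈ Finset.range k, b (p (s j)) (p (s k))
      ≤ ∑ j ∈ Finset.range k, w j := Finset.sum_le_sum fun j hj =>
        (hbs (Finset.mem_range.1 hj)).le.trans <|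
          mul_le_mul_of_nonneg_left (pow_le_pow_of_le_one (by norm_num) (by norm_num)
            (hs.id_le j)) (by positivity)
    _ = η / 4 * ∑ j ∈ Finset.range k, (1 / 2 : ℝ) ^ j := (Finset.mul_sum ..).symm
    _ ≤ η / 4 * 2 := mul_le_mul_of_nonneg_left (sum_geometric_two_le k) (by positivity)
    _ < η := by linarith

section Superlevel

variable {X : Type*}

def peeledSuperlevelSet (g : ℕ → X → ℝ) (δ : ℝ) (k : ℕ) : Set X :=
  {x | δ ≤ g k x} \ ⋃ j < k, {x | δ / 2 < g j x}

variable {g : ℕ → X → ℝ} {δ : ℝ}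

theorem pairwise_disjoint_peeledSuperlevelSet (hδ : 0 < δ) :
    Pairwise (Function.onFun Disjoint (peeledSuperlevelSet g δ)) :=
  (pairwise_disjoint_on _).2 fun j k hjk => disjoint_left.2 fun x hxj hxk =>
    hxk.2 (mem_biUnion hjk (show δ / 2 < g j x by linarith [show δ ≤ g j x from hxj.1]))

variable [MeasurableSpace X]

theorem measurableSet_iUnion_lt_setOf_lt (hg : ∀ k, Measurable (g k)) (k : ℕ) (a : ℝ) :
    MeasurableSet (⋃ j < k, {x | a < g j x}) :=
  .iUnion fun j => .iUnion fun _ => measurableSet_lt measurable_const (hg j)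

theorem measurableSet_peeledSuperlevelSet (hg : ∀ k, Measurable (g k)) (k : ℕ) :
    MeasurableSet (peeledSuperlevelSet g δ k) :=
  (measurableSet_le measurable_const (hg k)).diff (measurableSet_iUnion_lt_setOf_lt hg k _)

variable {μ : Measure X}

theorem integral_sub_le_setIntegral_superlevel [IsProbabilityMeasure μ] {f : X → ℝ}
    (hf : Measurable f) (hfi : Integrable f μ) (hδ : 0 ≤ δ) :
    ∫ x, f x ∂μ - δ ≤ ∫ x in {x | δ ≤ f x}, f x ∂μ := by
  have hS : MeasurableSet {x | δ ≤ f x} := measurableSet_le measurable_const hf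
  have hSc : ∫ x in {x | δ ≤ f x}ᶜ, f x ∂μ ≤ δ :=
    calc ∫ x in {x | δ ≤ f x}ᶜ, f x ∂μ ≤ ∫ _ in {x | δ ≤ f x}ᶜ, δ ∂μ :=
          setIntegral_mono_on hfi.integrableOn (integrableOn_const (measure_ne_top _ _))
            hS.compl fun x hx => le_of_lt (not_le.1 hx)
      _ = μ.real {x | δ ≤ f x}ᶜ * δ := by rw [setIntegral_const, smul_eq_mul]
      _ ≤ 1 * δ := mul_le_mul_of_nonneg_right measureReal_le_one hδ
      _ = δ := one_mul δ
  linarith [integral_add_compl hS hfi]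

theorem setIntegral_inter_iUnion_le (hg : ∀ k, Measurable (g k)) (hgi : ∀ k, Integrable (g k) μ)
    (hg0 : ∀ k x, 0 ≤ g k x) (hg1 : ∀ k x, g k x ≤ 1) (hδ : 0 < δ) (k : ℕ) :
    ∫ x in {x | δ ≤ g k x} ∩ ⋃ j < k, {x | δ / 2 < g j x}, g k x ∂μ ≤
      2 / δ * ∑ j ∈ Finset.range k, ∫ x, g j x ∂μ := by
  set H : X → ℝ := fun x => 2 / δ * ∑ j ∈ Finset.range k, g j x
  have hHi : Integrable H μ := (integrable_finsetSum _ fun j _ => hgi j).const_mul _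
  have hH0 : ∀ x, 0 ≤ H x := fun x =>
    mul_nonneg (by positivity) (Finset.sum_nonneg fun j _ => hg0 j x)
  have hle : ∀ x ∈ ⋃ j < k, {x | δ / 2 < g j x}, g k x ≤ H x := by
    intro x hx
    obtain ⟨j, hjk, hj⟩ := mem_iUnion₂.1 hx
    have hjH : g j x ≤ ∑ i ∈ Finset.range k, g i x :=
      Finset.single_le_sum (fun i _ => hg0 i x) (Finset.mem_range.2 hjk)
    have : 1 < 2 / δ * g j x := by
      rw [div_mul_eq_mul_div, lt_div_iff₀ hδ]; linarith [show δ / 2 < g j x from hj]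
    linarith [hg1 k x, mul_le_mul_of_nonneg_left hjH (show 0 ≤ 2 / δ by positivity)]
  have hT : MeasurableSet ({x | δ ≤ g k x} ∩ ⋃ j < k, {x | δ / 2 < g j x}) :=
    (measurableSet_le measurable_const (hg k)).inter (measurableSet_iUnion_lt_setOf_lt hg k _)
  calc _ ≤ ∫ x in {x | δ ≤ g k x} ∩ ⋃ j < k, {x | δ / 2 < g j x}, H x ∂μ :=
        setIntegral_mono_on (hgi k).integrableOn hHi.integrableOn hT fun x hx => hle x hx.2
    _ ≤ ∫ x, H x ∂μ := setIntegral_le_integral hHi (ae_of_all _ hH0)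
    _ = 2 / δ * ∑ j ∈ Finset.range k, ∫ x, g j x ∂μ := by
        rw [integral_const_mul, integral_finsetSum _ fun j _ => hgi j]

theorem integral_sub_lt_setIntegral_peeledSuperlevelSet [IsProbabilityMeasure μ]
    (hg : ∀ k, Measurable (g k)) (hgi : ∀ k, Integrable (g k) μ)
    (hg0 : ∀ k x, 0 ≤ g k x) (hg1 : ∀ k x, g k x ≤ 1) (hδ : 0 < δ) {k : ℕ}
    (hsum : ∑ j ∈ Finset.range k, ∫ x, g j x ∂μ < δ ^ 2 / 2) :
    ∫ x, g k x ∂μ - 2 * δ < ∫ x in peeledSuperlevelSet g δ k, g k x ∂μ := by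
  have hS := integral_sub_le_setIntegral_superlevel (hg k) (hgi k) hδ.le
  have hT := setIntegral_inter_iUnion_le hg hgi hg0 hg1 hδ k (μ := μ)
  have hδsum : 2 / δ * ∑ j ∈ Finset.range k, ∫ x, g j x ∂μ < δ := by
    calc _ < 2 / δ * (δ ^ 2 / 2) := mul_lt_mul_of_pos_left hsum (by positivity)
      _ = δ := by field_simp
  rw [peeledSuperlevelSet, ← sdiff_self_inter, setIntegral_sdiff _ (hgi k).integrableOn
    inter_subset_left]
  · linarith
  · exact (measurableSet_le measurable_const (hg k)).inter
      (measurableSet_iUnion_lt_setOf_lt hg k _)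

end Superlevel

theorem stmt_11_general {K : Type*} [TopologicalSpace K] [CompactSpace K]
    [MeasurableSpace K] [BorelSpace K]
    (μs : ℕ → Measure K) (hprob : ∀ n, IsProbabilityMeasure (μs n))
    (hconv : ∃ φ : C(K, ℝ) →L[ℝ] ℝ, ∀ f : C(K, ℝ),
      Filter.Tendsto (fun n => ∫ x, f x ∂(μs n)) Filter.atTop (nhds (φ f)))
    (f : ℕ → C(K, ℝ)) (hf0 : ∀ n x, 0 ≤ f n x) (hf1 : ∀ n x, f n x ≤ 1)
    (hweak : ∀ φ : C(K, ℝ) →L[ℝ] ℝ,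
      Filter.Tendsto (fun n => φ (f n)) Filter.atTop (nhds (0:ℝ)))
    (ε ε' : ℝ) (hlt : ε' < ε)
    (hint : ∀ n, ε ≤ ∫ x, f n x ∂(μs n)) :
    ∃ M : Set ℕ, M.Infinite ∧ ∃ A : ℕ → Set K,
      (∀ n ∈ M, MeasurableSet (A n)) ∧
      (∀ n ∈ M, ∀ m ∈ M, n ≠ m → Disjoint (A n) (A m)) ∧
      ∀ n ∈ M, ε' < ∫ x in A n, f n x ∂(μs n) := by
  obtain ⟨φ, hφ⟩ := hconv
  obtain ⟨δ, hδ, hεδ⟩ : ∃ δ > 0, ε' = ε - 2 * δ := ⟨(ε - ε') / 2, by linarith, by ring⟩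
  obtain ⟨n, hn, hsum⟩ := exists_strictMono_sum_lt (fun j => hφ (f j)) (hweak φ)
    (show 0 < δ ^ 2 / 2 by positivity)
  set g : ℕ → K → ℝ := fun k => f (n k)
  have hg : ∀ k, Measurable (g k) := fun k => (f (n k)).continuous.measurable
  have hgi : ∀ k N, Integrable (g k) (μs N) := fun k N =>
    (f (n k)).continuous.integrable_of_hasCompactSupport (.of_compactSpace _)
  have hA : ∀ k, Function.invFun n (n k) = k := Function.leftInverse_invFun hn.injective
  refine ⟨range n, infinite_range_of_injective hn.injective,
    fun m => peeledSuperlevelSet g δ (Function.invFun n m), ?_, ?_, ?_⟩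
  · rintro _ ⟨k, rfl⟩
    exact measurableSet_peeledSuperlevelSet hg _
  · rintro _ ⟨j, rfl⟩ _ ⟨k, rfl⟩ hne
    simp only [hA]
    exact pairwise_disjoint_peeledSuperlevelSet hδ (hn.injective.ne_iff.1 hne)
  · rintro _ ⟨k, rfl⟩
    simp only [hA]
    have := integral_sub_lt_setIntegral_peeledSuperlevelSet hg (fun j => hgi j (n k))
      (fun j => hf0 (n j)) (fun j => hf1 (n j)) hδ (hsum k)
    linarith [hint (n k)]

/-- extraction of disjoint sets carrying mass from a weakly null sequence
tested against a weak*-convergent sequence of probability measures. -/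
theorem stmt_11 {K : Type*} [TopologicalSpace K] [CompactSpace K] [T2Space K]
    [MeasurableSpace K] [BorelSpace K]
    (μs : ℕ → Measure K) (hprob : ∀ n, IsProbabilityMeasure (μs n))
    (hreg : ∀ n, (μs n).Regular)
    (hconv : ∃ φ : C(K, ℝ) →L[ℝ] ℝ, ∀ f : C(K, ℝ),
      Filter.Tendsto (fun n => ∫ x, f x ∂(μs n)) Filter.atTop (nhds (φ f)))
    (f : ℕ → C(K, ℝ)) (hf0 : ∀ n x, 0 ≤ f n x) (hf1 : ∀ n x, f n x ≤ 1)
    (hweak : ∀ φ : C(K, ℝ) →L[ℝ] ℝ,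
      Filter.Tendsto (fun n => φ (f n)) Filter.atTop (nhds (0:ℝ)))
    (ε ε' : ℝ) (hε' : 0 < ε') (hlt : ε' < ε)
    (hint : ∀ n, ε ≤ ∫ x, f n x ∂(μs n)) :
    ∃ M : Set ℕ, M.Infinite ∧ ∃ A : ℕ → Set K,
      (∀ n ∈ M, MeasurableSet (A n)) ∧
      (∀ n ∈ M, ∀ m ∈ M, n ≠ m → Disjoint (A n) (A m)) ∧
      ∀ n ∈ M, ε' < ∫ x in A n, f n x ∂(μs n) :=
  stmt_11_general μs hprob hconv f hf0 hf1 hweak ε ε' hlt hint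
end

section
/- Let X = X_{a,b} be the Bourgain–Delbaen space, with the associated tree T, compact space K = W^T and elements g_k ∈ K. Let k ∈ ℕ, f = g_k, s ∈ ℕ and x ∈ P_s(X). For each infinite branch B of T (infinite 0–1 sequence) let n(B,f) be the least n such that R(f(I(B,n))) ≤ d_s, where I(B,n) is the initial segment of B of length n. Let {N_i} be a maximal antichain of T among the nodes N that satisfy: length(N) ≤ n(B,f) for every infinite branch B passing through N. Then the collection {N_i} is finite and e_k^*(x) = Σ_i ⟨f, N_i, x⟩. -/
open MeasureTheory Set Ordinal Filter
open scoped Classical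

/-- `ℓ∞ = ℓ∞(ℕ)`. -/
noncomputable abbrev linf : Type := lp (fun _ : ℕ => ℝ) ⊤

/-- The `k`-th coordinate functional `e_k^*` on `ℓ∞`. -/
noncomputable def coordFn (k : ℕ) : linf →L[ℝ] ℝ :=
  LinearMap.mkContinuous
    { toFun := fun x => x k
      map_add' := fun _ _ => rfl
      map_smul' := fun _ _ => rfl }
    1 (fun x => by
      rw [one_mul]
      exact lp.norm_apply_le_norm (E := fun _ : ℕ => ℝ) ENNReal.top_ne_zero x k)

/-- The `k`-th coordinate vector `e_k` of `ℓ∞`. -/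
noncomputable def ek (k : ℕ) : linf := lp.single ⊤ k (1 : ℝ)

/-- `E_n = span{e_k : 1 ≤ k ≤ d n}`. -/
noncomputable def Esub (d : ℕ → ℕ) (n : ℕ) : Submodule ℝ linf :=
  Submodule.span ℝ {x : linf | ∃ k : ℕ, 1 ≤ k ∧ k ≤ d n ∧ x = ek k}

/-- All the data of the Bourgain–Delbaen construction: the constants `a`, `b`, `λ`, the
dimensions `d n`, the enumeration `φ` of tuples `(σ',i,m,σ'',j)`, the coordinate projections
`π_m`, the embeddings `i_{m,n}` and the limit projections `P_m`, together with their defining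
properties. -/
structure BDSetup where
  a : ℝ
  b : ℝ
  lam : ℝ
  hb : 0 < b
  hba : b < a
  ha : a < 1
  hlam : 1 < lam
  hineq : a + 2 * b * lam < lam
  /-- the dimensions -/
  d : ℕ → ℕ
  hd1 : d 1 = 1
  hd2 : d 2 = 2
  /-- the enumeration of the tuples `(σ', i, m, σ'', j)` -/
  φ : ℕ → ℤ × ℕ × ℕ × ℤ × ℕ
  hφ : ∀ n : ℕ, 2 ≤ n → Set.BijOn φ {k : ℕ | d n < k ∧ k ≤ d (n + 1)}
      {q : ℤ × ℕ × ℕ × ℤ × ℕ | (q.1 = 1 ∨ q.1 = -1) ∧ (q.2.2.2.1 = 1 ∨ q.2.2.2.1 = -1) ∧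
        1 ≤ q.2.2.1 ∧ q.2.2.1 < n ∧ 1 ≤ q.2.1 ∧ q.2.1 ≤ d q.2.2.1 ∧
        1 ≤ q.2.2.2.2 ∧ q.2.2.2.2 ≤ d n}
  /-- the coordinate projections `π_m` -/
  pi : ℕ → (linf →L[ℝ] linf)
  hpi : ∀ (m : ℕ) (x : linf) (k : ℕ), pi m x k = if 1 ≤ k ∧ k ≤ d m then x k else 0
  /-- the embeddings `i_{m,n}` -/
  iMap : ℕ → ℕ → (linf →L[ℝ] linf)
  hi12 : ∀ x : linf, x ∈ Esub d 1 → iMap 1 2 x = x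
  histep : ∀ n : ℕ, 2 ≤ n → ∀ x : linf, x ∈ Esub d n →
    iMap n (n + 1) x = x + ∑ k ∈ Finset.Ioc (d n) (d (n + 1)),
      (a * ((φ k).1 : ℝ) * x (φ k).2.1 +
        b * (((φ k).2.2.2.1 : ℤ) : ℝ) *
          ((x - iMap (φ k).2.2.1 n (pi (φ k).2.2.1 x)) (φ k).2.2.2.2)) • ek k
  hicomp : ∀ m n : ℕ, 1 ≤ m → m < n → ∀ x : linf, x ∈ Esub d m →
    iMap m (n + 1) x = iMap n (n + 1) (iMap m n x)
  hinorm : ∀ m n : ℕ, 1 ≤ m → m < n → ∀ x : linf, x ∈ Esub d m → ‖iMap m n x‖ ≤ lam * ‖x‖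
  /-- the coordinatewise limit projections `P_m` -/
  P : ℕ → (linf →L[ℝ] linf)
  hP0 : P 0 = 0
  hPlim : ∀ m : ℕ, 1 ≤ m → ∀ (x : linf) (k : ℕ),
    Filter.Tendsto (fun n => (iMap m n (pi m x)) k) Filter.atTop (nhds (P m x k))
  hPproj : ∀ m : ℕ, (P m).comp (P m) = P m
  hPnorm : ∀ m : ℕ, ‖P m‖ ≤ lam

/-- The Bourgain–Delbaen space `X = X_{a,b}`, the closed linear span of `⋃ m, P_m(E_m)`. -/
noncomputable def Xsub (S : BDSetup) : Submodule ℝ linf :=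
  (Submodule.span ℝ (⋃ m ∈ {m : ℕ | 1 ≤ m}, (S.P m) '' (Esub S.d m))).topologicalClosure

/-- The restriction (quotient) map `Q : ℓ∞^* → X^*`. -/
noncomputable def QMap (S : BDSetup) (f : linf →L[ℝ] ℝ) : (Xsub S) →L[ℝ] ℝ :=
  f.comp (Xsub S).subtypeL

/-- The images `Q e_k^*` of the coordinate functionals in `X^*`. -/
noncomputable def Qe (S : BDSetup) (k : ℕ) : (Xsub S) →L[ℝ] ℝ := QMap S (coordFn k)

/-- One step of the recursive definition of `g_k`: from the value `(c, ω·m + ℓ)` at a node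
(coded as `(c, m, ℓ)`) to the value at its two immediate successors. -/
noncomputable def bdStep (S : BDSetup) : (ℝ × ℕ × ℕ) → Bool → (ℝ × ℕ × ℕ) :=
  fun w δ =>
    if w.2.2 ≤ 2 then (0, w.2.1, 0)
    else
      if δ = false then
        (if (S.φ w.2.2).1 = -1 then -S.a else S.a, w.2.1, (S.φ w.2.2).2.1)
      else
        (if (S.φ w.2.2).2.2.2.1 = -1 then -S.b else S.b,
          max w.2.1 (S.φ w.2.2).2.2.1, (S.φ w.2.2).2.2.2.2)

/-- The walk along a node of the binary tree (a finite list of 0–1 choices, read from the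
root). -/
noncomputable def bdWalk (S : BDSetup) : (ℝ × ℕ × ℕ) → List Bool → (ℝ × ℕ × ℕ)
  | w, [] => w
  | w, δ :: N => bdWalk S (bdStep S w δ) N

/-- The element `g_k` of `K`, here recorded as a function from nodes to `(c, m, j)`,
coding the value `(c, ω·m + j) ∈ W`. -/
noncomputable def gElem (S : BDSetup) (k : ℕ) : List Bool → (ℝ × ℕ × ℕ) :=
  fun N => bdWalk S (1, 0, k) N

/-- The evaluation `⟨f, N, x⟩` of `x` by `f` at a node `N`:
`(∏_{t=1}^{n} V(f(I(N,t)))) · ((I − P_{Q̂(f(N))})^* e_{R(f(N))}^*)(x)`. -/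
noncomputable def nodeVal (S : BDSetup) (f : List Bool → ℝ × ℕ × ℕ) (N : List Bool)
    (x : linf) : ℝ :=
  (∏ t ∈ Finset.range N.length, (f (N.take (t + 1))).1) *
    coordFn (f N).2.2 ((ContinuousLinearMap.id ℝ linf - S.P (f N).2.1) x)

/-- A node `N` satisfies `length N ≤ n(B,f)` for every branch `B` through `N` iff every
proper initial segment of `N` carries an `R`-value exceeding `d s`. -/
def GoodNode (S : BDSetup) (f : List Bool → ℝ × ℕ × ℕ) (s : ℕ) (N : List Bool) : Prop :=
  ∀ t : ℕ, t < N.length → S.d s < (f (N.take t)).2.2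

/-!
At a node `N` whose `R`-value `ℓ` exceeds `d_s`, the value `⟨g_k, N, x⟩` is the sum of the values
at the two children of `N`. For `x = P_s x` this is the relation
`x_ℓ = a σ' x_i + b σ'' (x_j - (P_{m'} x)_j)`, where `φ ℓ = (σ', i, m', σ'', j)`, which defines
the coordinate `ℓ` in the Bourgain–Delbaen construction; one writes it for `x` and for `P_m x`,
subtracts, and uses `P_{m'} P_m = P_{min m' m}`.
The `R`-value strictly decreases from a node to its children, so admissible nodes have length at
most `k`. Hence a maximal antichain of admissible nodes is finite, and splitting from the root
down to it shows that the sum over the antichain is the value at the root, which is `e_k^*(x)`.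
-/

theorem coordFn_apply (k : ℕ) (x : linf) : coordFn k x = x k := rfl

theorem ek_apply (k t : ℕ) : ek k t = if t = k then 1 else 0 := by
  simp [ek, Pi.single_apply]

theorem linf_sum_apply {ι : Type*} (s : Finset ι) (f : ι → linf) (t : ℕ) :
    (∑ i ∈ s, f i) t = ∑ i ∈ s, f i t := by
  rw [lp.coeFn_sum, Finset.sum_apply]

theorem Esub_apply_eq_zero {d : ℕ → ℕ} {n : ℕ} {x : linf} (hx : x ∈ Esub d n) {t : ℕ}
    (ht : ¬(1 ≤ t ∧ t ≤ d n)) : x t = 0 := by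
  induction hx using Submodule.span_induction with
  | mem y hy =>
    obtain ⟨k, hk1, hk2, rfl⟩ := hy
    rw [ek_apply, if_neg]
    rintro rfl
    exact ht ⟨hk1, hk2⟩
  | zero => rfl
  | add y z _ _ hy hz => simp [hy, hz]
  | smul c y _ hy => simp [hy]

theorem Esub_mono {d : ℕ → ℕ} {n n' : ℕ} (h : d n ≤ d n') : Esub d n ≤ Esub d n' :=
  Submodule.span_mono fun _ ⟨k, h1, h2, hx⟩ => ⟨k, h1, h2.trans h, hx⟩

theorem ek_mem_Esub {d : ℕ → ℕ} {n k : ℕ} (h1 : 1 ≤ k) (h2 : k ≤ d n) : ek k ∈ Esub d n :=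
  Submodule.subset_span ⟨k, h1, h2, rfl⟩

theorem ite_neg_eq_mul_sign (c : ℝ) {σ : ℤ} (hσ : σ = 1 ∨ σ = -1) :
    (if σ = -1 then -c else c) = c * σ := by
  rcases hσ with rfl | rfl <;> norm_num

theorem add_min_max {β : Type*} [AddCommMagma β] (f : ℕ → β) (m n : ℕ) :
    f (min m n) + f (max m n) = f m + f n := by
  rcases le_total m n with h | h
  · rw [min_eq_left h, max_eq_right h]
  · rw [min_eq_right h, max_eq_left h, add_comm]

theorem List.forall_take_append_singleton {α : Type*} (p : List α → Prop) (N : List α) (a : α) :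
    (∀ t < (N ++ [a]).length, p ((N ++ [a]).take t)) ↔
      (∀ t < N.length, p (N.take t)) ∧ p N := by
  simp only [List.length_append, List.length_singleton, Nat.lt_succ_iff_lt_or_eq, or_imp,
    forall_and, forall_eq]
  refine and_congr (forall₂_congr fun t ht => ?_) ?_
  · rw [List.take_append_of_le_length ht.le]
  · rw [List.take_left]

theorem List.prod_range_take_append_singleton {α M : Type*} [CommMonoid M] (g : List α → M)
    (N : List α) (a : α) :
    ∏ t ∈ Finset.range (N ++ [a]).length, g ((N ++ [a]).take (t + 1)) =
      (∏ t ∈ Finset.range N.length, g (N.take (t + 1))) * g (N ++ [a]) := by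
  rw [List.length_append, List.length_singleton, Finset.prod_range_succ,
    List.take_of_length_le (by simp)]
  congr 1
  refine Finset.prod_congr rfl fun t ht => ?_
  rw [List.take_append_of_le_length (Finset.mem_range.mp ht)]

theorem List.prefix_iff_eq_or_append_singleton_prefix {α : Type*} {N M : List α} :
    N <+: M ↔ M = N ∨ ∃ a, N ++ [a] <+: M := by
  constructor
  · rintro ⟨_ | ⟨a, u⟩, rfl⟩
    · exact Or.inl (List.append_nil N)
    · exact Or.inr ⟨a, u, by simp⟩
  · rintro (rfl | ⟨a, h⟩)
    · exact List.prefix_refl M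
    · exact (List.prefix_append N [a]).trans h

theorem sum_filter_prefix_eq_add {β : Type*} [AddCommMonoid β] (v : List Bool → β)
    {N : List Bool} (s : Finset (List Bool)) (hN : N ∉ s) :
    ∑ M ∈ s with N <+: M, v M =
      ∑ M ∈ s with N ++ [false] <+: M, v M + ∑ M ∈ s with N ++ [true] <+: M, v M := by
  have hsplit : ∀ M ∈ s, N <+: M ↔ N ++ [false] <+: M ∨ N ++ [true] <+: M := fun M hM => by
    rw [List.prefix_iff_eq_or_append_singleton_prefix, Bool.exists_bool,
      or_iff_right fun h : M = N => hN (h ▸ hM)]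
  rw [Finset.filter_congr hsplit, Finset.filter_or, Finset.sum_union]
  refine Finset.disjoint_filter.mpr fun M _ h0 h1 => ?_
  simpa using List.prefix_of_prefix_length_le h0 h1 (by simp)

section MaximalAntichain

variable {β : Type*} [AddCommMonoid β] {Q : List Bool → Prop} {v : List Bool → β} {K : ℕ}
  {𝒩 : Set (List Bool)}

theorem sum_prefix_eq_of_maximal_antichain
    (hsplit : ∀ N : List Bool, Q N → v (N ++ [false]) + v (N ++ [true]) = v N)
    (hbdd : ∀ N : List Bool, (∀ t < N.length, Q (N.take t)) → N.length ≤ K) (hfin : 𝒩.Finite)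
    (hgood : ∀ M ∈ 𝒩, ∀ t < M.length, Q (M.take t))
    (hanti : ∀ N ∈ 𝒩, ∀ M ∈ 𝒩, N <+: M → N = M)
    (hmax : ∀ N : List Bool, (∀ t < N.length, Q (N.take t)) → ∃ M ∈ 𝒩, M <+: N ∨ N <+: M)
    (N : List Bool) (hN : ∀ t < N.length, Q (N.take t)) (hpref : ∀ M ∈ 𝒩, M <+: N → M = N) :
    ∑ M ∈ hfin.toFinset with N <+: M, v M = v N := by
  have hlen := hbdd N hN -- makes `K + 1 - N.length` decrease
  by_cases hN𝒩 : N ∈ 𝒩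
  · rw [Finset.filter_congr (q := (· = N)) fun M hM =>
      ⟨fun h => (hanti N hN𝒩 M (hfin.mem_toFinset.mp hM) h).symm, fun h => h ▸ List.prefix_refl M⟩,
      Finset.filter_eq', if_pos (hfin.mem_toFinset.mpr hN𝒩), Finset.sum_singleton]
  obtain ⟨M₀, hM₀, hM₀N | hNM₀⟩ := hmax N hN
  · exact absurd (hpref M₀ hM₀ hM₀N ▸ hM₀) hN𝒩
  obtain rfl | ⟨δ, hNδ⟩ := List.prefix_iff_eq_or_append_singleton_prefix.mp hNM₀
  · exact absurd hM₀ hN𝒩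
  have hQN : Q N := by
    have := hgood M₀ hM₀ N.length
      ((by simp : N.length < (N ++ [δ]).length).trans_le hNδ.length_le)
    rwa [← List.prefix_iff_eq_take.mp hNM₀] at this
  have hchild (δ : Bool) := sum_prefix_eq_of_maximal_antichain hsplit hbdd hfin hgood hanti hmax
    (N ++ [δ]) ((List.forall_take_append_singleton Q N δ).mpr ⟨hN, hQN⟩) fun M hM h => by
      rcases List.prefix_concat_iff.mp h with h | h
      · exact h
      · exact absurd (hpref M hM h ▸ hM) hN𝒩
  rw [sum_filter_prefix_eq_add v hfin.toFinset (fun h => hN𝒩 (hfin.mem_toFinset.mp h)), hchild,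
    hchild, hsplit N hQN]
termination_by K + 1 - N.length

theorem sum_eq_of_maximal_antichain
    (hsplit : ∀ N : List Bool, Q N → v (N ++ [false]) + v (N ++ [true]) = v N)
    (hbdd : ∀ N : List Bool, (∀ t < N.length, Q (N.take t)) → N.length ≤ K) (hfin : 𝒩.Finite)
    (hgood : ∀ M ∈ 𝒩, ∀ t < M.length, Q (M.take t))
    (hanti : ∀ N ∈ 𝒩, ∀ M ∈ 𝒩, N <+: M → N = M)
    (hmax : ∀ N : List Bool, (∀ t < N.length, Q (N.take t)) → ∃ M ∈ 𝒩, M <+: N ∨ N <+: M) :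
    ∑ M ∈ hfin.toFinset, v M = v [] := by
  simpa using sum_prefix_eq_of_maximal_antichain hsplit hbdd hfin hgood hanti hmax []
    (by simp) fun M _ h => List.prefix_nil.mp h

end MaximalAntichain

namespace BDSetup

variable (S : BDSetup)

theorem d_lt_d_succ {n : ℕ} (hn : 1 ≤ n) (hpos : 1 ≤ S.d n) : S.d n < S.d (n + 1) := by
  rcases eq_or_lt_of_le hn with rfl | hn
  · simp [S.hd1, S.hd2]
  obtain ⟨_, hk, -⟩ := (S.hφ n hn).surjOn
    (show ((1 : ℤ), 1, 1, (1 : ℤ), 1) ∈ _ from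
      ⟨Or.inl rfl, Or.inl rfl, le_rfl, hn, le_rfl, S.hd1.ge, le_rfl, hpos⟩)
  exact hk.1.trans_le hk.2

theorem one_le_d {n : ℕ} (hn : 1 ≤ n) : 1 ≤ S.d n := by
  induction n, hn using Nat.le_induction with
  | base => exact S.hd1.ge
  | succ n hn ih => exact ih.trans (S.d_lt_d_succ hn ih).le

theorem d_mono {m n : ℕ} (hm : 1 ≤ m) (h : m ≤ n) : S.d m ≤ S.d n := by
  induction n, h using Nat.le_induction with
  | base => exact le_rfl
  | succ n hn ih => exact ih.trans (S.d_lt_d_succ (hm.trans hn) (S.one_le_d (hm.trans hn))).le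

theorem le_d {n : ℕ} (hn : 1 ≤ n) : n ≤ S.d n := by
  induction n, hn using Nat.le_induction with
  | base => exact S.hd1.ge
  | succ n hn ih => exact ih.trans_lt (S.d_lt_d_succ hn (S.one_le_d hn))

theorem exists_d_lt_le_d_succ {ℓ : ℕ} (h : 2 < ℓ) :
    ∃ n, 2 ≤ n ∧ S.d n < ℓ ∧ ℓ ≤ S.d (n + 1) := by
  have h2 : S.d 2 < ℓ := by rw [S.hd2]; exact h
  set n := Nat.findGreatest (fun t => S.d t < ℓ) ℓ
  have hn2 : 2 ≤ n := Nat.le_findGreatest h.le h2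
  have hdn : S.d n < ℓ := Nat.findGreatest_spec (P := fun t => S.d t < ℓ) h.le h2
  refine ⟨n, hn2, hdn, not_lt.mp fun hc => ?_⟩
  exact Nat.findGreatest_is_greatest (lt_add_one n)
    ((S.le_d (by omega)).trans_lt hdn) hc

theorem phi_spec {ℓ n : ℕ} (hn : 2 ≤ n) (h1 : S.d n < ℓ) (h2 : ℓ ≤ S.d (n + 1)) :
    ((S.φ ℓ).1 = 1 ∨ (S.φ ℓ).1 = -1) ∧ ((S.φ ℓ).2.2.2.1 = 1 ∨ (S.φ ℓ).2.2.2.1 = -1) ∧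
      1 ≤ (S.φ ℓ).2.2.1 ∧ (S.φ ℓ).2.2.1 < n ∧ 1 ≤ (S.φ ℓ).2.1 ∧
      (S.φ ℓ).2.1 ≤ S.d (S.φ ℓ).2.2.1 ∧ 1 ≤ (S.φ ℓ).2.2.2.2 ∧ (S.φ ℓ).2.2.2.2 ≤ S.d n :=
  (S.hφ n hn).mapsTo ⟨h1, h2⟩

theorem pi_mem_Esub (m : ℕ) (x : linf) : S.pi m x ∈ Esub S.d m := by
  have : S.pi m x = ∑ k ∈ Finset.Icc 1 (S.d m), x k • ek k := by
    refine lp.ext (funext fun t => ?_)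
    rw [S.hpi, linf_sum_apply]
    simp [ek_apply, Finset.mem_Icc]
  rw [this]
  exact Submodule.sum_mem _ fun k hk => Submodule.smul_mem _ _
    (ek_mem_Esub (Finset.mem_Icc.mp hk).1 (Finset.mem_Icc.mp hk).2)

theorem pi_pi_of_le {m n : ℕ} (hm : 1 ≤ m) (h : m ≤ n) (x : linf) :
    S.pi m (S.pi n x) = S.pi m x := by
  refine lp.ext (funext fun t => ?_)
  rw [S.hpi, S.hpi, S.hpi]
  split_ifs with ht ht'
  · rfl
  · exact absurd ⟨ht.1, ht.2.trans (S.d_mono hm h)⟩ ht'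
  · rfl

theorem step_apply {n : ℕ} (hn : 2 ≤ n) {x : linf} (hx : x ∈ Esub S.d n) (t : ℕ) :
    S.iMap n (n + 1) x t = x t +
      if S.d n < t ∧ t ≤ S.d (n + 1) then
        S.a * ((S.φ t).1 : ℝ) * x (S.φ t).2.1 +
          S.b * (((S.φ t).2.2.2.1 : ℤ) : ℝ) *
            (x (S.φ t).2.2.2.2 - S.iMap (S.φ t).2.2.1 n (S.pi (S.φ t).2.2.1 x) (S.φ t).2.2.2.2)
      else 0 := by
  rw [S.histep n hn x hx, lp.coeFn_add, Pi.add_apply, linf_sum_apply]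
  simp [ek_apply, Finset.mem_Ioc]

theorem step_apply_of_le {n : ℕ} (hn : 1 ≤ n) {x : linf} (hx : x ∈ Esub S.d n) {t : ℕ}
    (ht : t ≤ S.d n) : S.iMap n (n + 1) x t = x t := by
  rcases eq_or_lt_of_le hn with rfl | hn
  · rw [S.hi12 x hx]
  · rw [S.step_apply hn hx, if_neg (by omega), add_zero]

theorem step_mem_Esub {n : ℕ} (hn : 1 ≤ n) {x : linf} (hx : x ∈ Esub S.d n) :
    S.iMap n (n + 1) x ∈ Esub S.d (n + 1) := by
  have hmono : Esub S.d n ≤ Esub S.d (n + 1) := Esub_mono (S.d_mono hn n.le_succ)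
  rcases eq_or_lt_of_le hn with rfl | hn
  · rw [S.hi12 x hx]
    exact hmono hx
  · rw [S.histep n hn x hx]
    refine Submodule.add_mem _ (hmono hx) (Submodule.sum_mem _ fun j hj => ?_)
    rw [Finset.mem_Ioc] at hj
    exact Submodule.smul_mem _ _ (ek_mem_Esub (by have := S.one_le_d hn.le; omega) hj.2)

theorem iMap_mem_Esub {m n : ℕ} (hm : 1 ≤ m) (h : m < n) {x : linf} (hx : x ∈ Esub S.d m) :
    S.iMap m n x ∈ Esub S.d n := by
  induction n, h using Nat.le_induction with
  | base => exact S.step_mem_Esub hm hx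
  | succ n hn ih =>
    rw [S.hicomp m n hm hn x hx]
    exact S.step_mem_Esub (by omega) ih

theorem iMap_apply_eq_of_le {m n N : ℕ} (hm : 1 ≤ m) (hmn : m < n) (hN : n ≤ N)
    {x : linf} (hx : x ∈ Esub S.d m) {t : ℕ} (ht : t ≤ S.d n) :
    S.iMap m N x t = S.iMap m n x t := by
  induction N, hN using Nat.le_induction with
  | base => rfl
  | succ N hN ih =>
    rw [S.hicomp m N hm (by omega) x hx,
      S.step_apply_of_le (by omega) (S.iMap_mem_Esub hm (by omega) hx)
        (ht.trans (S.d_mono (by omega) hN)), ih]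

theorem iMap_comp {m m' n : ℕ} (hm : 1 ≤ m) (h1 : m < m') (h2 : m' < n) {x : linf}
    (hx : x ∈ Esub S.d m) : S.iMap m' n (S.iMap m m' x) = S.iMap m n x := by
  induction n, h2 using Nat.le_induction with
  | base => exact (S.hicomp m m' hm h1 x hx).symm
  | succ n hn ih =>
    rw [S.hicomp m n hm (by omega) x hx, ← ih,
      S.hicomp m' n (by omega) hn _ (S.iMap_mem_Esub hm h1 hx)]

theorem P_zero_apply (x : linf) : S.P 0 x = 0 := by
  rw [S.hP0, zero_apply]

theorem P_apply_eq_iMap {m n : ℕ} (hm : 1 ≤ m) (hmn : m < n) (x : linf) {t : ℕ}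
    (ht : t ≤ S.d n) : S.P m x t = S.iMap m n (S.pi m x) t := by
  refine tendsto_nhds_unique (S.hPlim m hm x t) (tendsto_const_nhds.congr' ?_)
  filter_upwards [eventually_ge_atTop n] with N hN
  exact (S.iMap_apply_eq_of_le hm hmn hN (S.pi_mem_Esub m x) ht).symm

theorem P_apply_of_le {m t : ℕ} (hm : 1 ≤ m) (h1 : 1 ≤ t) (ht : t ≤ S.d m) (x : linf) :
    S.P m x t = x t := by
  rw [S.P_apply_eq_iMap hm m.lt_succ_self x (ht.trans (S.d_mono hm m.le_succ)),
    S.step_apply_of_le hm (S.pi_mem_Esub m x) ht, S.hpi, if_pos ⟨h1, ht⟩]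

theorem P_congr {m : ℕ} (hm : 1 ≤ m) {x y : linf} (h : S.pi m x = S.pi m y) :
    S.P m x = S.P m y := by
  refine lp.ext (funext fun t => tendsto_nhds_unique (S.hPlim m hm x t) ?_)
  simpa only [h] using S.hPlim m hm y t

theorem pi_P_of_le {m m' : ℕ} (hm : 1 ≤ m) (h : m ≤ m') (x : linf) :
    S.pi m (S.P m' x) = S.pi m x := by
  refine lp.ext (funext fun t => ?_)
  rw [S.hpi, S.hpi]
  split_ifs with ht
  · exact S.P_apply_of_le (hm.trans h) ht.1 (ht.2.trans (S.d_mono hm h)) x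
  · rfl

theorem pi_P_of_lt {m m' : ℕ} (hm' : 1 ≤ m') (h : m' < m) (x : linf) :
    S.pi m (S.P m' x) = S.iMap m' m (S.pi m' x) := by
  refine lp.ext (funext fun t => ?_)
  rw [S.hpi]
  split_ifs with ht
  · exact S.P_apply_eq_iMap hm' h x ht.2
  · exact (Esub_apply_eq_zero (S.iMap_mem_Esub hm' h (S.pi_mem_Esub m' x)) ht).symm

theorem P_P_of_lt {m m' : ℕ} (hm' : 1 ≤ m') (h : m' < m) (x : linf) :
    S.P m (S.P m' x) = S.P m' x := by
  refine lp.ext (funext fun t => tendsto_nhds_unique (S.hPlim m (by omega) _ t) ?_)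
  refine (S.hPlim m' hm' x t).congr' ?_
  filter_upwards [eventually_gt_atTop m] with N hN
  rw [S.pi_P_of_lt hm' h, S.iMap_comp hm' h hN (S.pi_mem_Esub m' x)]

theorem P_P (m m' : ℕ) (x : linf) : S.P m (S.P m' x) = S.P (min m m') x := by
  rcases Nat.eq_zero_or_pos m with rfl | hm
  · simp [P_zero_apply]
  rcases Nat.eq_zero_or_pos m' with rfl | hm'
  · simp [P_zero_apply]
  rcases lt_trichotomy m m' with h | rfl | h
  · rw [min_eq_left h.le, S.P_congr hm (S.pi_P_of_le hm h.le x)]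
  · rw [min_self, ← ContinuousLinearMap.comp_apply, S.hPproj]
  · rw [min_eq_right h.le, S.P_P_of_lt hm' h]

theorem P_eq_P_min_of_P_eq {s : ℕ} {x : linf} (hx : S.P s x = x) (m : ℕ) :
    S.P m x = S.P (min m s) x := by
  conv_lhs => rw [← hx]
  exact S.P_P m s x

theorem apply_eq_of_P_eq {n ℓ : ℕ} (hn : 2 ≤ n) (h1 : S.d n < ℓ) (h2 : ℓ ≤ S.d (n + 1))
    {y : linf} (hy : S.P n y = y) :
    y ℓ = S.a * (S.φ ℓ).1 * y (S.φ ℓ).2.1 +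
      S.b * (S.φ ℓ).2.2.2.1 * (y (S.φ ℓ).2.2.2.2 - S.P (S.φ ℓ).2.2.1 y (S.φ ℓ).2.2.2.2) := by
  obtain ⟨-, -, hm'1, hm'n, hi1, hi2, hj1, hj2⟩ := S.phi_spec hn h1 h2
  have hi : (S.φ ℓ).2.1 ≤ S.d n := hi2.trans (S.d_mono hm'1 hm'n.le)
  conv_lhs => rw [← hy]
  rw [S.P_apply_eq_iMap (by omega) n.lt_succ_self y h2, S.step_apply hn (S.pi_mem_Esub n y),
    if_pos ⟨h1, h2⟩, S.pi_pi_of_le hm'1 hm'n.le, ← S.P_apply_eq_iMap hm'1 hm'n y hj2,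
    S.hpi, S.hpi, S.hpi, if_neg (by omega), if_pos ⟨hi1, hi⟩, if_pos ⟨hj1, hj2⟩, zero_add]

theorem sub_P_apply_eq {s : ℕ} {x : linf} (hx : S.P s x = x) (m : ℕ) {ℓ : ℕ}
    (h3 : 2 < ℓ) (hds : S.d s < ℓ) :
    x ℓ - S.P m x ℓ =
      (if (S.φ ℓ).1 = -1 then -S.a else S.a) * (x (S.φ ℓ).2.1 - S.P m x (S.φ ℓ).2.1) +
      (if (S.φ ℓ).2.2.2.1 = -1 then -S.b else S.b) *
        (x (S.φ ℓ).2.2.2.2 - S.P (max m (S.φ ℓ).2.2.1) x (S.φ ℓ).2.2.2.2) := by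
  obtain ⟨n, hn, h1, h2⟩ := S.exists_d_lt_le_d_succ h3
  obtain ⟨hσ', hσ'', -⟩ := S.phi_spec hn h1 h2
  have hsn : s ≤ n := by
    by_contra! h
    have := S.d_mono (by omega) (show n + 1 ≤ s by omega)
    omega
  have hPx : S.P n x = x := by
    rw [← hx, S.P_P, min_eq_right hsn]
  have hPPx : S.P n (S.P m x) = S.P m x := by
    rw [S.P_P, S.P_eq_P_min_of_P_eq hx, S.P_eq_P_min_of_P_eq hx m,
      show min (min n m) s = min m s by omega]
  have A := S.apply_eq_of_P_eq hn h1 h2 hPx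
  have B := S.apply_eq_of_P_eq hn h1 h2 hPPx
  rw [S.P_P] at B
  have hminmax := add_min_max (fun r => S.P r x (S.φ ℓ).2.2.2.2) (S.φ ℓ).2.2.1 m
  rw [ite_neg_eq_mul_sign _ hσ', ite_neg_eq_mul_sign _ hσ'', max_comm]
  linear_combination A - B + S.b * (S.φ ℓ).2.2.2.1 * hminmax

theorem sub_P_apply_eq_zero {s : ℕ} (hs : 1 ≤ s) {x : linf} (hx : S.P s x = x) (m : ℕ)
    {ℓ : ℕ} (hl : ℓ ≤ 2) (hds : S.d s < ℓ) : x ℓ - S.P m x ℓ = 0 := by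
  have hds1 := S.one_le_d hs
  obtain rfl : s = 1 := by
    by_contra h
    have := S.d_mono one_le_two (show 2 ≤ s by omega)
    rw [S.hd2] at this
    omega
  obtain rfl : ℓ = 2 := by omega
  rcases Nat.eq_zero_or_pos m with rfl | hm
  · rw [S.P_zero_apply, ← hx, S.P_apply_eq_iMap le_rfl one_lt_two x S.hd2.ge,
      S.hi12 _ (S.pi_mem_Esub 1 x), S.hpi, if_neg (by rw [S.hd1]; omega)]
    simp
  · rw [S.P_eq_P_min_of_P_eq hx, min_eq_right hm, hx, _root_.sub_self]

theorem gElem_append (k : ℕ) (N : List Bool) (δ : Bool) :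
    gElem S k (N ++ [δ]) = bdStep S (gElem S k N) δ := by
  suffices ∀ w, bdWalk S w (N ++ [δ]) = bdStep S (bdWalk S w N) δ from this _
  induction N with
  | nil => exact fun _ => rfl
  | cons a N ih => exact fun w => ih (bdStep S w a)

theorem bdStep_snd_snd_lt {w : ℝ × ℕ × ℕ} (hw : 0 < w.2.2) (δ : Bool) :
    (bdStep S w δ).2.2 < w.2.2 := by
  unfold bdStep
  by_cases hw2 : w.2.2 ≤ 2
  · simpa [hw2] using hw
  obtain ⟨n, hn, h1, h2⟩ := S.exists_d_lt_le_d_succ (not_le.mp hw2)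
  obtain ⟨-, -, hm'1, hm'n, -, hi2, -, hj2⟩ := S.phi_spec hn h1 h2
  have := S.d_mono hm'1 hm'n.le
  split_ifs <;> dsimp only <;> omega

theorem nodeVal_eq (f : List Bool → ℝ × ℕ × ℕ) (N : List Bool) (x : linf) :
    nodeVal S f N x = (∏ t ∈ Finset.range N.length, (f (N.take (t + 1))).1) *
      (x (f N).2.2 - S.P (f N).2.1 x (f N).2.2) := rfl

theorem nodeVal_append (f : List Bool → ℝ × ℕ × ℕ) (N : List Bool) (δ : Bool) (x : linf) :
    nodeVal S f (N ++ [δ]) x = (∏ t ∈ Finset.range N.length, (f (N.take (t + 1))).1) *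
      (f (N ++ [δ])).1 * (x (f (N ++ [δ])).2.2 - S.P (f (N ++ [δ])).2.1 x (f (N ++ [δ])).2.2) := by
  rw [nodeVal_eq, List.prod_range_take_append_singleton (fun M => (f M).1)]

theorem nodeVal_gElem_nil (k : ℕ) (x : linf) : nodeVal S (gElem S k) [] x = x k := by
  simp [nodeVal_eq, gElem, bdWalk, P_zero_apply]

theorem nodeVal_append_false_add_true {k s : ℕ} (hs : 1 ≤ s) {x : linf} (hx : S.P s x = x)
    {N : List Bool} (hN : S.d s < (gElem S k N).2.2) :
    nodeVal S (gElem S k) (N ++ [false]) x + nodeVal S (gElem S k) (N ++ [true]) x =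
      nodeVal S (gElem S k) N x := by
  rw [nodeVal_append, nodeVal_append, gElem_append, gElem_append, nodeVal_eq]
  set w := gElem S k N
  by_cases hw2 : w.2.2 ≤ 2
  · simp [bdStep, hw2, S.sub_P_apply_eq_zero hs hx w.2.1 hw2 hN]
  · simp only [bdStep, hw2, Bool.true_eq_false, if_false, if_true]
    rw [S.sub_P_apply_eq hx w.2.1 (not_le.mp hw2) hN]
    ring

end BDSetup

theorem GoodNode.snd_snd_add_length_le {S : BDSetup} {k s : ℕ} {N : List Bool}
    (hN : GoodNode S (gElem S k) s N) : (gElem S k N).2.2 + N.length ≤ k := by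
  induction N using List.reverseRecOn with
  | nil => exact le_rfl
  | append_singleton N δ ih =>
    obtain ⟨hN, hRN⟩ :=
      (List.forall_take_append_singleton (fun M => S.d s < (gElem S k M).2.2) N δ).mp hN
    have := S.bdStep_snd_snd_lt (w := gElem S k N) (by omega) δ
    rw [S.gElem_append, List.length_append, List.length_singleton]
    have := ih hN
    omega

theorem GoodNode.length_le {S : BDSetup} {k s : ℕ} {N : List Bool}
    (hN : GoodNode S (gElem S k) s N) : N.length ≤ k :=
  (Nat.le_add_left _ _).trans hN.snd_snd_add_length_le

theorem stmt_14_general (S : BDSetup) (k s : ℕ) (hs : 1 ≤ s)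
    (x : linf) (hx : x ∈ (S.P s) '' ((Xsub S : Submodule ℝ linf) : Set linf))
    (𝒩 : Set (List Bool))
    (hgood : ∀ N ∈ 𝒩, GoodNode S (gElem S k) s N)
    (hantichain : ∀ N ∈ 𝒩, ∀ M ∈ 𝒩, N ≠ M → ¬ N <+: M ∧ ¬ M <+: N)
    (hmax : ∀ N : List Bool, GoodNode S (gElem S k) s N →
      ∃ M ∈ 𝒩, M <+: N ∨ N <+: M) :
    ∃ hfin : 𝒩.Finite,
      coordFn k x = ∑ N ∈ hfin.toFinset, nodeVal S (gElem S k) N x := by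
  have hPx : S.P s x = x := by
    obtain ⟨u, -, rfl⟩ := hx
    rw [← ContinuousLinearMap.comp_apply, S.hPproj]
  have hfin : 𝒩.Finite :=
    (List.finite_length_le Bool k).subset fun N hN => (hgood N hN).length_le
  refine ⟨hfin, ?_⟩
  rw [sum_eq_of_maximal_antichain (Q := fun N => S.d s < (gElem S k N).2.2)
    (fun N hN => S.nodeVal_append_false_add_true hs hPx hN) (fun N hN => GoodNode.length_le hN)
    hfin hgood
    (fun N hN M hM h => by_contra fun hne => (hantichain N hN M hM hne).1 h) hmax,
    S.nodeVal_gElem_nil, coordFn_apply]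

/-- Proposition 4.1: if `{N_i}` is a maximal collection of incomparable
admissible nodes, then it is finite and `e_k^*(x) = Σ_i ⟨g_k, N_i, x⟩`. -/
theorem stmt_14 (S : BDSetup) (k s : ℕ) (hk : 1 ≤ k) (hs : 1 ≤ s)
    (x : linf) (hx : x ∈ (S.P s) '' ((Xsub S : Submodule ℝ linf) : Set linf))
    (𝒩 : Set (List Bool))
    (hgood : ∀ N ∈ 𝒩, GoodNode S (gElem S k) s N)
    (hantichain : ∀ N ∈ 𝒩, ∀ M ∈ 𝒩, N ≠ M → ¬ N <+: M ∧ ¬ M <+: N)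
    (hmax : ∀ N : List Bool, GoodNode S (gElem S k) s N →
      ∃ M ∈ 𝒩, M <+: N ∨ N <+: M) :
    ∃ hfin : 𝒩.Finite,
      coordFn k x = ∑ N ∈ hfin.toFinset, nodeVal S (gElem S k) N x :=
  stmt_14_general S k s hs x hx 𝒩 hgood hantichain hmax
end
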